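/- Fix an integer K ≥ 1, an integer ℓ with 1 ≤ ℓ ≤ K, and a real γ > 0. Fix reals λ_1,…,λ_K > 0 and c_1,…,c_ℓ > 0, and set c_i = 0 for ℓ < i ≤ K. Fix sequences n_1,…,n_K : ℕ → ℕ with n_i(n)/n → λ_i as n → ∞. On a probability space, for each n let p_1^{(n)},…,p_K^{(n)} be random variables with values in (0,1) such that: (i) for each 1 ≤ i ≤ ℓ, −(2/n_i(n))·log p_i^{(n)} → c_i almost surely as n → ∞; (ii) for each ℓ < i ≤ K and every n, p_i^{(n)} is uniformly distributed on (0,1). Define the Pareto combination statistic T(u) = ∑_{i=1}^K u_i^{−1/γ} for u ∈ (0,1)^K, its null survival function H(t) = μ_K{u : T(u) ≥ t}, and the combined p-value q_n = H(T(p_1^{(n)},…,p_K^{(n)})). Then −(2/n)·log q_n → max_{1≤i≤ℓ} λ_i·c_i almost surely as n → ∞; in particular, when ℓ ≥ 2 the Pareto combination test is not asymptotically Bahadur optimal since max_{1≤i≤ℓ} λ_i c_i < ∑_{i=1}^ℓ λ_i c_i. -/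

import Mathlib

open MeasureTheory Filter Set ProbabilityTheory
open scoped ENNReal Topology

/-! On the unit cube `M(u) ≤ T(u) ≤ K · M(u)` with `M(u) = maxᵢ uᵢ^(-1/γ)`, and a union bound
over the coordinates gives `t^(-γ) ≤ H(t) ≤ K^(1+γ) t^(-γ)` for `t ≥ 1`. Hence
`-log q_n = maxᵢ (-log pᵢ⁽ⁿ⁾) + O(1)`, so `-(2/n) log q_n` has the limit of
`maxᵢ (-(2/n) log pᵢ⁽ⁿ⁾)`, which is `λᵢ cᵢ` on the non-null coordinates and, by Borel–Cantelli,
`0` on the uniform ones. -/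

instance : IsProbabilityMeasure (volume.restrict (Icc (0 : ℝ) 1)) :=
  ⟨by simp⟩

section ParetoSurvival

variable {ι : Type*} [Fintype ι] {γ : ℝ}

lemma setOf_le_rpow_neg_inv_inter_Icc (hγ : 0 < γ) {s : ℝ} (hs : 0 < s) :
    {x : ℝ | s ≤ x ^ (-(1 / γ))} ∩ Icc 0 1 = Ioc 0 (min (s ^ (-γ)) 1) := by
  have hexp : -(1 / γ) < 0 := by simp [hγ]
  have key : ∀ x : ℝ, 0 < x → (s ≤ x ^ (-(1 / γ)) ↔ x ≤ s ^ (-γ)) := fun x hx => by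
    rw [← Real.rpow_le_rpow_iff_of_neg (Real.rpow_pos_of_pos hs _) hx hexp,
      ← Real.rpow_mul hs.le, neg_mul_neg, mul_one_div_cancel hγ.ne', Real.rpow_one]
  ext x
  simp only [mem_inter_iff, mem_ofPred_eq, mem_Ioc, mem_Icc, le_min_iff]
  constructor
  · rintro ⟨hsx, hx0, hx1⟩
    have hxpos : 0 < x := hx0.lt_of_ne <| by
      rintro rfl
      rw [Real.zero_rpow hexp.ne] at hsx
      exact hs.not_ge hsx
    exact ⟨hxpos, (key x hxpos).1 hsx, hx1⟩
  · rintro ⟨hxpos, hxs, hx1⟩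
    exact ⟨(key x hxpos).2 hxs, hxpos.le, hx1⟩

lemma uniform_setOf_le_rpow_neg_inv (hγ : 0 < γ) {s : ℝ} (hs : 0 < s) :
    volume.restrict (Icc (0 : ℝ) 1) {x | s ≤ x ^ (-(1 / γ))} =
      ENNReal.ofReal (min (s ^ (-γ)) 1) := by
  rw [Measure.restrict_apply (measurableSet_le measurable_const (by fun_prop)),
    setOf_le_rpow_neg_inv_inter_Icc hγ hs, Real.volume_Ioc, sub_zero]

noncomputable def paretoStat (γ : ℝ) (u : ι → ℝ) : ℝ :=
  ∑ i, u i ^ (-(1 / γ))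

lemma rpow_le_paretoStat {u : ι → ℝ} (hu : ∀ i, 0 ≤ u i) (i : ι) :
    u i ^ (-(1 / γ)) ≤ paretoStat γ u :=
  Finset.single_le_sum (f := fun i => u i ^ (-(1 / γ))) (fun i _ => Real.rpow_nonneg (hu i) _)
    (Finset.mem_univ i)

variable (ι) in
noncomputable def paretoSurvival (γ t : ℝ) : ℝ :=
  ((Measure.pi fun _ : ι => volume.restrict (Icc (0 : ℝ) 1)) {u | t ≤ paretoStat γ u}).toReal

lemma ofReal_rpow_neg_le_measure_paretoStat_ge [Nonempty ι] (hγ : 0 < γ) {t : ℝ} (ht : 1 ≤ t) :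
    ENNReal.ofReal (t ^ (-γ)) ≤
      (Measure.pi fun _ : ι => volume.restrict (Icc (0 : ℝ) 1)) {u | t ≤ paretoStat γ u} := by
  set ν := volume.restrict (Icc (0 : ℝ) 1)
  obtain ⟨i₀⟩ := ‹Nonempty ι›
  have hS : MeasurableSet {x : ℝ | t ≤ x ^ (-(1 / γ))} :=
    measurableSet_le measurable_const (by fun_prop)
  have hcube : ∀ᵐ u ∂Measure.pi fun _ : ι => ν, ∀ i, u i ∈ Icc (0 : ℝ) 1 :=
    ae_all_iff.2 fun i => Measure.tendsto_eval_ae_ae.eventually (ae_restrict_mem measurableSet_Icc)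
  -- off the cube the summands `x ^ (-(1 / γ))` may be negative (junk values of `rpow`)
  have hsub : Function.eval i₀ ⁻¹' {x | t ≤ x ^ (-(1 / γ))} ≤ᵐ[Measure.pi fun _ : ι => ν]
      {u | t ≤ paretoStat γ u} := by
    filter_upwards [hcube] with u hu hi₀
    exact hi₀.trans (rpow_le_paretoStat (fun i => (hu i).1) i₀)
  calc ENNReal.ofReal (t ^ (-γ))
      = ν {x | t ≤ x ^ (-(1 / γ))} := by
        rw [uniform_setOf_le_rpow_neg_inv hγ (by linarith),
          min_eq_left (Real.rpow_le_one_of_one_le_of_nonpos ht (by linarith))]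
    _ = (Measure.pi fun _ : ι => ν) (Function.eval i₀ ⁻¹' {x | t ≤ x ^ (-(1 / γ))}) :=
        ((measurePreserving_eval (fun _ : ι => ν) i₀).measure_preimage hS.nullMeasurableSet).symm
    _ ≤ _ := measure_mono_ae hsub

lemma measure_paretoStat_ge_le [Nonempty ι] (hγ : 0 < γ) {t : ℝ} (ht : 0 < t) :
    (Measure.pi fun _ : ι => volume.restrict (Icc (0 : ℝ) 1)) {u | t ≤ paretoStat γ u} ≤
      Fintype.card ι * ENNReal.ofReal ((t / Fintype.card ι) ^ (-γ)) := by
  set ν := volume.restrict (Icc (0 : ℝ) 1)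
  set s := t / Fintype.card ι
  have hs : 0 < s := div_pos ht (by exact_mod_cast Fintype.card_pos (α := ι))
  have hsub : {u : ι → ℝ | t ≤ paretoStat γ u} ⊆
      ⋃ i, Function.eval i ⁻¹' {x | s ≤ x ^ (-(1 / γ))} := by
    intro u hu
    by_contra hnot
    simp only [mem_iUnion, mem_preimage, Function.eval, mem_ofPred_eq, not_exists, not_le] at hnot
    have hlt : paretoStat γ u < ∑ _i : ι, s :=
      Finset.sum_lt_sum_of_nonempty Finset.univ_nonempty fun i _ => hnot i
    rw [Finset.sum_const, Finset.card_univ, nsmul_eq_mul,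
      mul_div_cancel₀ _ (by exact_mod_cast Fintype.card_ne_zero)] at hlt
    exact hlt.not_ge hu
  have hS : MeasurableSet {x : ℝ | s ≤ x ^ (-(1 / γ))} :=
    measurableSet_le measurable_const (by fun_prop)
  calc (Measure.pi fun _ : ι => ν) {u | t ≤ paretoStat γ u}
      ≤ ∑ i, (Measure.pi fun _ : ι => ν) (Function.eval i ⁻¹' {x | s ≤ x ^ (-(1 / γ))}) :=
        (measure_mono hsub).trans (measure_iUnion_fintype_le _ _)
    _ = ∑ _i : ι, ENNReal.ofReal (min (s ^ (-γ)) 1) := by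
        refine Finset.sum_congr rfl fun i _ => ?_
        rw [(measurePreserving_eval (fun _ : ι => ν) i).measure_preimage hS.nullMeasurableSet,
          uniform_setOf_le_rpow_neg_inv hγ hs]
    _ ≤ Fintype.card ι * ENNReal.ofReal (s ^ (-γ)) := by
        rw [Finset.sum_const, Finset.card_univ, nsmul_eq_mul]
        gcongr
        exact min_le_left _ _

lemma rpow_neg_le_paretoSurvival [Nonempty ι] (hγ : 0 < γ) {t : ℝ} (ht : 1 ≤ t) :
    t ^ (-γ) ≤ paretoSurvival ι γ t :=
  (ENNReal.ofReal_le_iff_le_toReal (measure_ne_top _ _)).1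
    (ofReal_rpow_neg_le_measure_paretoStat_ge hγ ht)

lemma paretoSurvival_le [Nonempty ι] (hγ : 0 < γ) {t : ℝ} (ht : 0 < t) :
    paretoSurvival ι γ t ≤ (Fintype.card ι : ℝ) ^ (1 + γ) * t ^ (-γ) := by
  have hK : (0 : ℝ) < Fintype.card ι := by exact_mod_cast Fintype.card_pos
  calc paretoSurvival ι γ t
      ≤ (Fintype.card ι * ENNReal.ofReal ((t / Fintype.card ι) ^ (-γ))).toReal :=
        ENNReal.toReal_mono (by finiteness) (measure_paretoStat_ge_le hγ ht)
    _ = (Fintype.card ι : ℝ) ^ (1 + γ) * t ^ (-γ) := by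
        rw [ENNReal.toReal_mul, ENNReal.toReal_natCast, ENNReal.toReal_ofReal (by positivity),
          Real.div_rpow ht.le hK.le, Real.rpow_neg hK.le, Real.rpow_one_add' hK.le (by linarith)]
        field_simp

lemma neg_log_paretoSurvival_bounds [Nonempty ι] (hγ : 0 < γ) {t : ℝ} (ht : 1 ≤ t) :
    γ * Real.log t - (1 + γ) * Real.log (Fintype.card ι) ≤ -Real.log (paretoSurvival ι γ t) ∧
      -Real.log (paretoSurvival ι γ t) ≤ γ * Real.log t := by
  have ht0 : 0 < t := by linarith
  have hK : (0 : ℝ) < Fintype.card ι := by exact_mod_cast Fintype.card_pos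
  have hlow := rpow_neg_le_paretoSurvival (ι := ι) hγ ht
  have hHpos : 0 < paretoSurvival ι γ t := (Real.rpow_pos_of_pos ht0 _).trans_le hlow
  have hlog_low := Real.log_le_log (Real.rpow_pos_of_pos ht0 _) hlow
  have hlog_up := Real.log_le_log hHpos (paretoSurvival_le (ι := ι) hγ ht0)
  rw [Real.log_rpow ht0] at hlog_low
  rw [Real.log_mul (by positivity) (by positivity), Real.log_rpow hK, Real.log_rpow ht0] at hlog_up
  constructor <;> linarith

lemma mul_log_paretoStat_bounds [Nonempty ι] (hγ : 0 < γ) {x : ι → ℝ}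
    (hx : ∀ i, 0 < x i) :
    (⨆ i, -Real.log (x i)) ≤ γ * Real.log (paretoStat γ x) ∧
      γ * Real.log (paretoStat γ x) ≤ (⨆ i, -Real.log (x i)) + γ * Real.log (Fintype.card ι) := by
  obtain ⟨i₀, hi₀⟩ := exists_eq_ciSup_of_finite (f := fun i => -Real.log (x i))
  set m := ⨆ i, -Real.log (x i)
  have hterm : ∀ i, x i ^ (-(1 / γ)) = Real.exp (-Real.log (x i) / γ) := fun i => by
    rw [Real.rpow_def_of_pos (hx i)]; ring_nf
  have hT_low : Real.exp (m / γ) ≤ paretoStat γ x := by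
    rw [← hi₀, ← hterm]
    exact rpow_le_paretoStat (fun i => (hx i).le) i₀
  have hT_up : paretoStat γ x ≤ Fintype.card ι * Real.exp (m / γ) := by
    calc paretoStat γ x ≤ ∑ _i : ι, Real.exp (m / γ) := by
          refine Finset.sum_le_sum fun i _ => ?_
          rw [hterm]
          gcongr
          exact le_ciSup (f := fun i => -Real.log (x i)) (Finite.bddAbove_range _) i
      _ = Fintype.card ι * Real.exp (m / γ) := by
          rw [Finset.sum_const, Finset.card_univ, nsmul_eq_mul]
  have hT_pos : 0 < paretoStat γ x := (Real.exp_pos _).trans_le hT_low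
  have hlog_low : m / γ ≤ Real.log (paretoStat γ x) := (Real.le_log_iff_exp_le hT_pos).2 hT_low
  have hlog_up := Real.log_le_log hT_pos hT_up
  rw [Real.log_mul (by exact_mod_cast Fintype.card_ne_zero) (Real.exp_pos _).ne',
    Real.log_exp] at hlog_up
  rw [div_le_iff₀ hγ] at hlog_low
  have := mul_le_mul_of_nonneg_left hlog_up hγ.le
  rw [mul_add, mul_div_cancel₀ _ hγ.ne'] at this
  constructor <;> linarith

lemma abs_neg_log_paretoSurvival_sub_iSup_le [Nonempty ι] (hγ : 0 < γ) {x : ι → ℝ}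
    (hx : ∀ i, x i ∈ Ioc 0 1) :
    |-Real.log (paretoSurvival ι γ (paretoStat γ x)) - ⨆ i, -Real.log (x i)| ≤
      (1 + γ) * Real.log (Fintype.card ι) := by
  obtain ⟨i₀⟩ := ‹Nonempty ι›
  have hT : 1 ≤ paretoStat γ x := by
    calc 1 ≤ x i₀ ^ (-(1 / γ)) := Real.one_le_rpow_of_pos_of_le_one_of_nonpos (hx i₀).1 (hx i₀).2
          (neg_nonpos.2 (by positivity))
      _ ≤ paretoStat γ x := rpow_le_paretoStat (fun i => (hx i).1.le) i₀
  have hlogK : 0 ≤ Real.log (Fintype.card ι) := Real.log_nonneg (by exact_mod_cast Fintype.card_pos)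
  obtain ⟨hH_low, hH_up⟩ := neg_log_paretoSurvival_bounds (ι := ι) hγ hT
  obtain ⟨hT_low, hT_up⟩ := mul_log_paretoStat_bounds hγ fun i => (hx i).1
  rw [abs_le]
  constructor <;> nlinarith

lemma tendsto_neg_log_paretoSurvival [Nonempty ι] (hγ : 0 < γ)
    {x : ℕ → ι → ℝ} (hx : ∀ n i, x n i ∈ Ioc 0 1) {L : ι → ℝ}
    (hL : ∀ i, Tendsto (fun n : ℕ => -(2 / (n : ℝ)) * Real.log (x n i)) atTop (𝓝 (L i))) :
    Tendsto (fun n : ℕ => -(2 / (n : ℝ)) * Real.log (paretoSurvival ι γ (paretoStat γ (x n))))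
      atTop (𝓝 (⨆ i, L i)) := by
  have hsup : Tendsto (fun n : ℕ => ⨆ i, -(2 / (n : ℝ)) * Real.log (x n i)) atTop
      (𝓝 (⨆ i, L i)) := by
    simpa only [Finset.sup'_univ_eq_ciSup] using
      Tendsto.finset_sup'_nhds_apply Finset.univ_nonempty fun i _ => hL i
  set C := (1 + γ) * Real.log (Fintype.card ι)
  refine hsup.congr_dist <| squeeze_zero (fun _ => dist_nonneg) (fun n => ?_)
    (tendsto_const_div_atTop_nhds_zero_nat (2 * C))
  simp_rw [neg_mul_comm (2 / (n : ℝ))]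
  rw [← Real.mul_iSup_of_nonneg (by positivity), Real.dist_eq, ← mul_sub, abs_mul,
    abs_of_nonneg (by positivity), abs_sub_comm, mul_comm 2 C, mul_div_assoc, mul_comm C]
  exact mul_le_mul_of_nonneg_left (abs_neg_log_paretoSurvival_sub_iSup_le hγ (hx n))
    (by positivity)

end ParetoSurvival

section NullPValues

variable {Ω : Type*} [MeasurableSpace Ω] {μ : Measure Ω}

lemma measure_le_le_ofReal_of_map_eq {X : Ω → ℝ} (hX : Measurable X)
    (hmap : μ.map X = volume.restrict (Ioo 0 1)) (x : ℝ) :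
    μ {ω | X ω ≤ x} ≤ ENNReal.ofReal x := by
  calc μ {ω | X ω ≤ x} = volume (Iic x ∩ Ioo 0 1) := by
        rw [← Measure.restrict_apply measurableSet_Iic, ← hmap,
          Measure.map_apply hX measurableSet_Iic]
        rfl
    _ ≤ volume (Ioc 0 x) := measure_mono fun y ⟨hyx, hy0, _⟩ => ⟨hy0, hyx⟩
    _ = ENNReal.ofReal x := by rw [Real.volume_Ioc, sub_zero]

variable {X : ℕ → Ω → ℝ}

lemma ae_eventually_exp_lt (hX : ∀ n x, μ {ω | X n ω ≤ x} ≤ ENNReal.ofReal x)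
    {ε : ℝ} (hε : 0 < ε) :
    ∀ᵐ ω ∂μ, ∀ᶠ n : ℕ in atTop, Real.exp (-(ε * n)) < X n ω := by
  -- Borel–Cantelli: the probabilities `μ {X n ≤ e^{-εn}} ≤ e^{-εn}` are summable
  have hr : ENNReal.ofReal (Real.exp (-ε)) < 1 := by
    rw [ENNReal.ofReal_lt_one, Real.exp_lt_one_iff]; linarith
  have hsum : ∑' n : ℕ, μ {ω | X n ω ≤ Real.exp (-(ε * n))} ≠ ⊤ := by
    refine ne_top_of_le_ne_top ?_ (ENNReal.tsum_le_tsum fun n => hX n _)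
    have hgeom : ∀ n : ℕ, ENNReal.ofReal (Real.exp (-(ε * n))) =
        ENNReal.ofReal (Real.exp (-ε)) ^ n := fun n => by
      rw [← ENNReal.ofReal_pow (Real.exp_pos _).le, ← Real.exp_nat_mul]; ring_nf
    simp_rw [hgeom, ENNReal.tsum_geometric]
    exact ENNReal.inv_ne_top.2 (tsub_pos_of_lt hr).ne'
  filter_upwards [ae_eventually_notMem hsum] with ω hω
  filter_upwards [hω] with n hn
  simpa using hn

lemma ae_tendsto_log_div_natCast (hX1 : ∀ n ω, X n ω ≤ 1)
    (hX : ∀ n x, μ {ω | X n ω ≤ x} ≤ ENNReal.ofReal x) :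
    ∀ᵐ ω ∂μ, Tendsto (fun n : ℕ => Real.log (X n ω) / n) atTop (𝓝 0) := by
  have hexp := ae_all_iff.2 fun m : ℕ => ae_eventually_exp_lt hX (ε := 1 / (m + 1)) (by positivity)
  filter_upwards [hexp] with ω hω
  rw [tendsto_order]
  constructor
  · intro a ha
    obtain ⟨m, hm⟩ := exists_nat_one_div_lt (neg_pos.2 ha)
    filter_upwards [hω m, eventually_gt_atTop 0] with n hn hn0
    have hn0' : (0 : ℝ) < n := by exact_mod_cast hn0
    have hlog : -(1 / (m + 1 : ℝ) * n) < Real.log (X n ω) :=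
      (Real.lt_log_iff_exp_lt ((Real.exp_pos _).trans hn)).2 hn
    rw [lt_div_iff₀ hn0']
    nlinarith
  · intro a ha
    filter_upwards [hω 0] with n hn
    exact (div_nonpos_of_nonpos_of_nonneg
      (Real.log_nonpos ((Real.exp_pos _).trans hn).le (hX1 n ω)) n.cast_nonneg).trans_lt ha

lemma ae_tendsto_neg_two_div_mul_log_of_map_eq (hX : ∀ n, Measurable (X n))
    (hX1 : ∀ n ω, X n ω ≤ 1) (hmap : ∀ n, μ.map (X n) = volume.restrict (Ioo 0 1)) :
    ∀ᵐ ω ∂μ, Tendsto (fun n : ℕ => -(2 / (n : ℝ)) * Real.log (X n ω)) atTop (𝓝 0) := by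
  filter_upwards [ae_tendsto_log_div_natCast hX1
    fun n => measure_le_le_ofReal_of_map_eq (hX n) (hmap n)] with ω hω
  rw [← mul_zero (-2 : ℝ)]
  exact (hω.const_mul (-2)).congr fun n => by ring

end NullPValues

lemma tendsto_div_natCast_of_tendsto_div {f : ℕ → ℝ} {m : ℕ → ℕ} {c r : ℝ}
    (hf : Tendsto (fun n => f n / m n) atTop (𝓝 c))
    (hm : Tendsto (fun n => (m n : ℝ) / n) atTop (𝓝 r)) (hr : r ≠ 0) :
    Tendsto (fun n => f n / n) atTop (𝓝 (r * c)) := by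
  refine (hm.mul hf).congr' ?_
  filter_upwards [hm.eventually_ne hr] with n hn
  have hmn : (m n : ℝ) ≠ 0 := fun h => hn (by rw [h, zero_div])
  field_simp

lemma iSup_castLE_eq_iSup {α : Type*} [ConditionallyCompleteLattice α] {ℓ K : ℕ} [NeZero ℓ]
    (hℓK : ℓ ≤ K) {f : Fin K → α}
    (hf : ∀ i : Fin K, ℓ ≤ (i : ℕ) → ∃ j : Fin ℓ, f i ≤ f (Fin.castLE hℓK j)) :
    ⨆ j : Fin ℓ, f (Fin.castLE hℓK j) = ⨆ i, f i := by
  have : Nonempty (Fin K) := ⟨Fin.castLE hℓK 0⟩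
  refine le_antisymm (ciSup_le fun j => le_ciSup (Finite.bddAbove_range f) _)
    (ciSup_le fun i => ?_)
  rcases lt_or_ge (i : ℕ) ℓ with hi | hi
  · exact le_ciSup_of_le (Finite.bddAbove_range _) ⟨i, hi⟩ le_rfl
  · obtain ⟨j, hj⟩ := hf i hi
    exact le_ciSup_of_le (Finite.bddAbove_range _) j hj

lemma ciSup_lt_sum {ι : Type*} [Fintype ι] {f : ι → ℝ} (hf : ∀ i, 0 ≤ f i) {i j : ι}
    (hij : i ≠ j) (hi : 0 < f i) (hj : 0 < f j) : ⨆ k, f k < ∑ k, f k := by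
  have : Nonempty ι := ⟨i⟩
  obtain ⟨k, hk⟩ := exists_eq_ciSup_of_finite (f := f)
  obtain ⟨l, hlk, hl⟩ : ∃ l ≠ k, 0 < f l := by
    by_cases hik : i = k
    exacts [⟨j, hik ▸ hij.symm, hj⟩, ⟨i, hik, hi⟩]
  rw [← hk]
  exact Finset.single_lt_sum hlk (Finset.mem_univ _) (Finset.mem_univ _) hl fun m _ _ => hf m

theorem pareto_combination_exact_slope_general
    {K : ℕ} (ℓ : ℕ) (hℓ : 1 ≤ ℓ) (hℓK : ℓ ≤ K) (γ : ℝ) (hγ : 0 < γ)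
    (lam c : Fin K → ℝ)
    (hlam : ∀ i, 0 < lam i)
    (hcpos : ∀ i : Fin K, (i : ℕ) < ℓ → 0 < c i)
    (hcnull : ∀ i : Fin K, ℓ ≤ (i : ℕ) → c i = 0)
    (nseq : Fin K → ℕ → ℕ)
    (hn : ∀ i, Tendsto (fun n : ℕ => (nseq i n : ℝ) / (n : ℝ)) atTop (nhds (lam i)))
    {Ω : Type*} [MeasurableSpace Ω] (μ : Measure Ω)
    (p : ℕ → Fin K → Ω → ℝ)
    (hmeas : ∀ n i, Measurable (p n i))
    (hval : ∀ n i ω, p n i ω ∈ Ioo (0 : ℝ) 1)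
    (hslope : ∀ i : Fin K, (i : ℕ) < ℓ →
      ∀ᵐ ω ∂μ, Tendsto (fun n : ℕ => -(2 / (nseq i n : ℝ)) * Real.log (p n i ω))
        atTop (nhds (c i)))
    (hnull : ∀ i : Fin K, ℓ ≤ (i : ℕ) →
      ∀ n, Measure.map (p n i) μ = volume.restrict (Ioo (0 : ℝ) 1))
    -- the Pareto combination statistic, its null survival function and its p-value
    (T : (Fin K → ℝ) → ℝ)
    (hT : ∀ u : Fin K → ℝ, T u = ∑ i : Fin K, (u i) ^ (-(1 / γ)))
    (H : ℝ → ℝ)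
    (hH : ∀ t, H t =
      ((Measure.pi fun _ : Fin K => volume.restrict (Icc (0 : ℝ) 1))
        {u | t ≤ T u}).toReal)
    (q : ℕ → Ω → ℝ)
    (hq : ∀ n ω, q n ω = H (T (fun i => p n i ω))) :
    (∀ᵐ ω ∂μ, Tendsto (fun n : ℕ => -(2 / (n : ℝ)) * Real.log (q n ω))
      atTop (nhds (⨆ i : Fin ℓ, lam (Fin.castLE hℓK i) * c (Fin.castLE hℓK i)))) ∧
    (2 ≤ ℓ →
      (⨆ i : Fin ℓ, lam (Fin.castLE hℓK i) * c (Fin.castLE hℓK i)) <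
        ∑ i : Fin K, lam i * c i) := by
  have : NeZero ℓ := ⟨by omega⟩
  set L : Fin K → ℝ := fun i => lam i * c i
  have hLpos : ∀ i : Fin K, (i : ℕ) < ℓ → 0 < L i := fun i hi => mul_pos (hlam i) (hcpos i hi)
  have hLnull : ∀ i : Fin K, ℓ ≤ (i : ℕ) → L i = 0 := fun i hi => by simp [L, hcnull i hi]
  have hsupL : ⨆ j : Fin ℓ, L (Fin.castLE hℓK j) = ⨆ i, L i :=
    iSup_castLE_eq_iSup hℓK fun i hi => ⟨0, (hLnull i hi).le.trans (hLpos _ (by simp; omega)).le⟩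
  have hconv : ∀ i, ∀ᵐ ω ∂μ,
      Tendsto (fun n : ℕ => -(2 / (n : ℝ)) * Real.log (p n i ω)) atTop (𝓝 (L i)) := by
    intro i
    rcases lt_or_ge (i : ℕ) ℓ with hi | hi
    · filter_upwards [hslope i hi] with ω hω
      exact (tendsto_div_natCast_of_tendsto_div (f := fun n => -2 * Real.log (p n i ω))
        (hω.congr fun n => by ring) (hn i) (hlam i).ne').congr fun n => by ring
    · simpa only [hLnull i hi] using ae_tendsto_neg_two_div_mul_log_of_map_eq (hmeas · i)
        (fun n ω => (hval n i ω).2.le) (hnull i hi)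
  rw [hsupL]
  refine ⟨?_, fun h2ℓ => ?_⟩
  · obtain rfl : T = paretoStat γ := funext hT
    obtain rfl : H = paretoSurvival (Fin K) γ := funext hH
    have : Nonempty (Fin K) := ⟨Fin.castLE hℓK 0⟩
    filter_upwards [ae_all_iff.2 hconv] with ω hω
    simp only [hq]
    exact tendsto_neg_log_paretoSurvival hγ (fun n i => Ioo_subset_Ioc_self (hval n i ω)) hω
  · have hLnonneg : ∀ i, 0 ≤ L i := fun i =>
      (lt_or_ge (i : ℕ) ℓ).elim (fun hi => (hLpos i hi).le) fun hi => (hLnull i hi).ge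
    exact ciSup_lt_sum hLnonneg (i := Fin.castLE hℓK ⟨0, hℓ⟩) (j := Fin.castLE hℓK ⟨1, h2ℓ⟩)
      (by simp [Fin.ext_iff]) (hLpos _ (by simp; omega)) (hLpos _ (by simp; omega))

/-- The Pareto combination test has exact slope `max_{i ≤ ℓ} λ i * c i`; in particular,
when `ℓ ≥ 2` it is not asymptotically Bahadur optimal since
`max_{i ≤ ℓ} λ i c i < ∑ λ i c i`. -/
theorem pareto_combination_exact_slope
    {K : ℕ} (hK : 1 ≤ K) (ℓ : ℕ) (hℓ : 1 ≤ ℓ) (hℓK : ℓ ≤ K) (γ : ℝ) (hγ : 0 < γ)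
    (lam c : Fin K → ℝ)
    (hlam : ∀ i, 0 < lam i)
    (hcpos : ∀ i : Fin K, (i : ℕ) < ℓ → 0 < c i)
    (hcnull : ∀ i : Fin K, ℓ ≤ (i : ℕ) → c i = 0)
    (nseq : Fin K → ℕ → ℕ)
    (hn : ∀ i, Tendsto (fun n : ℕ => (nseq i n : ℝ) / (n : ℝ)) atTop (nhds (lam i)))
    {Ω : Type*} [MeasurableSpace Ω] (μ : Measure Ω) [IsProbabilityMeasure μ]
    (p : ℕ → Fin K → Ω → ℝ)
    (hmeas : ∀ n i, Measurable (p n i))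
    (hval : ∀ n i ω, p n i ω ∈ Ioo (0 : ℝ) 1)
    (hslope : ∀ i : Fin K, (i : ℕ) < ℓ →
      ∀ᵐ ω ∂μ, Tendsto (fun n : ℕ => -(2 / (nseq i n : ℝ)) * Real.log (p n i ω))
        atTop (nhds (c i)))
    (hnull : ∀ i : Fin K, ℓ ≤ (i : ℕ) →
      ∀ n, Measure.map (p n i) μ = volume.restrict (Ioo (0 : ℝ) 1))
    -- the Pareto combination statistic, its null survival function and its p-value
    (T : (Fin K → ℝ) → ℝ)
    (hT : ∀ u : Fin K → ℝ, T u = ∑ i : Fin K, (u i) ^ (-(1 / γ)))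
    (H : ℝ → ℝ)
    (hH : ∀ t, H t =
      ((Measure.pi fun _ : Fin K => volume.restrict (Icc (0 : ℝ) 1))
        {u | t ≤ T u}).toReal)
    (q : ℕ → Ω → ℝ)
    (hq : ∀ n ω, q n ω = H (T (fun i => p n i ω))) :
    (∀ᵐ ω ∂μ, Tendsto (fun n : ℕ => -(2 / (n : ℝ)) * Real.log (q n ω))
      atTop (nhds (⨆ i : Fin ℓ, lam (Fin.castLE hℓK i) * c (Fin.castLE hℓK i)))) ∧
    (2 ≤ ℓ →
      (⨆ i : Fin ℓ, lam (Fin.castLE hℓK i) * c (Fin.castLE hℓK i)) <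
        ∑ i : Fin K, lam i * c i) :=
  pareto_combination_exact_slope_general ℓ hℓ hℓK γ hγ lam c hlam hcpos hcnull nseq hn μ p hmeas
    hval hslope hnull T hT H hH q hq
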